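/- arXiv:1909.06120 — 4 statements merged into one kernel-verified Lean document; each statement's English description precedes it below -/
import Mathlib

section
/- Let u₁,…,u_m be orthonormal vectors in ℝ^d and κ > 3. Define R_{ij} = (κ−3)·Σ_{l=1}^d ⟨e_l,u_i⟩²⟨e_l,u_j⟩² / [sqrt(2 + (κ−3)Σ_l ⟨e_l,u_i⟩⁴)·sqrt(2 + (κ−3)Σ_l ⟨e_l,u_j⟩⁴)] for i ≠ j. Then Σ_{i≠j} R_{ij} ≤ ((κ−3)/2)·m. -/
/-!
Each denominator is at least `√2 · √2 = 2`, so the sum is at most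
`(κ - 3)/2 · ∑ₗ (∑ᵢ uᵢₗ²)²`. By Bessel's inequality applied to `eₗ`, every column sum
`sₗ = ∑ᵢ uᵢₗ²` lies in `[0, 1]`, hence `sₗ² ≤ sₗ`, and `∑ₗ sₗ = ∑ᵢ ‖uᵢ‖² = m`.
-/

open Finset

theorem Orthonormal.sum_sq_apply_le_one {ι n : Type*} [Fintype n] [DecidableEq n]
    {v : ι → EuclideanSpace ℝ n} (hv : Orthonormal ℝ v) (s : Finset ι) (l : n) :
    ∑ i ∈ s, v i l ^ 2 ≤ 1 := by
  simpa [EuclideanSpace.inner_single_right] using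
    hv.sum_inner_products_le (x := EuclideanSpace.single l (1 : ℝ)) (s := s)

theorem div_sqrt_two_add_mul_sqrt_two_add_le {a b c : ℝ} (ha : 0 ≤ a) (hb : 0 ≤ b)
    (hc : 0 ≤ c) : c / (√(2 + a) * √(2 + b)) ≤ c / 2 := by
  have h2 : 2 ≤ √(2 + a) * √(2 + b) :=
    calc (2 : ℝ) = √2 * √2 := (Real.mul_self_sqrt zero_le_two).symm
      _ ≤ √(2 + a) * √(2 + b) := by gcongr <;> linarith
  gcongr

/-- Off-diagonal correlation sum bound: for orthonormal u₁,…,u_m in ℝ^d and κ > 3,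
with R_{ij} as given, Σ_{i≠j} R_{ij} ≤ ((κ−3)/2)·m. -/
theorem sum_offdiag_correlations_le
    {d m : ℕ} (u : Fin m → Fin d → ℝ) (κ : ℝ) (hκ : 3 < κ)
    (horth : ∀ i j, (∑ l, u i l * u j l) = if i = j then 1 else 0) :
    (∑ i, ∑ j,
        if i ≠ j then
          ((κ - 3) * ∑ l, (u i l) ^ 2 * (u j l) ^ 2) /
            (Real.sqrt (2 + (κ - 3) * ∑ l, (u i l) ^ 4) *
              Real.sqrt (2 + (κ - 3) * ∑ l, (u j l) ^ 4))
        else 0) ≤ ((κ - 3) / 2) * m := by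
  have hκ₀ : 0 ≤ κ - 3 := by linarith
  have hv : Orthonormal ℝ fun i => WithLp.toLp 2 (u i) :=
    orthonormal_iff_ite.2 fun i j => by simpa [PiLp.inner_apply, mul_comm] using horth i j
  have hrow : ∀ i, ∑ l, u i l ^ 2 = 1 := fun i => by simpa [sq] using horth i i
  calc _ ≤ ∑ i, ∑ j, (κ - 3) * (∑ l, u i l ^ 2 * u j l ^ 2) / 2 := by
        gcongr with i _ j _
        split_ifs
        · exact div_sqrt_two_add_mul_sqrt_two_add_le (by positivity) (by positivity)
            (by positivity)
        · positivity
    _ = (κ - 3) / 2 * ∑ l, (∑ i, u i l ^ 2) ^ 2 := by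
        simp only [sq (∑ i, _), sum_mul_sum]
        simp only [mul_sum, sum_div]
        rw [sum_comm_cycle]
        ring_nf
    _ ≤ (κ - 3) / 2 * ∑ l, ∑ i, u i l ^ 2 := by
        gcongr with l
        exact pow_le_of_le_one (by positivity) (hv.sum_sq_apply_le_one univ l) two_ne_zero
    _ = (κ - 3) / 2 * m := by simp [sum_comm (γ := Fin d), hrow]
end

section
/- Let u, ũ be orthonormal vectors in ℝ^d (so ⟨u,ũ⟩ = 0 and ‖u‖₂ = ‖ũ‖₂ = 1), and let κ > 3. Then the correlation (κ−3)·Σ_{l=1}^d u_l²·ũ_l² / [sqrt(2 + (κ−3)Σ_l u_l⁴)·sqrt(2 + (κ−3)Σ_l ũ_l⁴)] is at most 1 − ε₁ where ε₁ = 1 − 1/sqrt((2/(κ−3))² + 1) ∈ (0,1). -/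
/-!
With `a = κ - 3`, `S = ∑ u_l² w_l²`, `A = ∑ u_l⁴` and `B = ∑ w_l⁴`, Cauchy–Schwarz gives
`S² ≤ A B`, and `A, B ≤ 1` because `∑ v_l⁴ ≤ (∑ v_l²)²`.
Hence `(a S)² ((2/a)² + 1) = (4 + a²) S² ≤ 4 + a² A B ≤ (2 + a A)(2 + a B)`, which after
taking square roots is the bound `a S / √((2 + a A)(2 + a B)) ≤ 1 / √((2/a)² + 1)`.
-/

open Finset Real

theorem Finset.sum_pow_four_le_sq_sum_sq {ι : Type*} (s : Finset ι) (v : ι → ℝ) :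
    ∑ i ∈ s, v i ^ 4 ≤ (∑ i ∈ s, v i ^ 2) ^ 2 := by
  simpa only [← pow_mul] using
    sum_sq_le_sq_sum_of_nonneg (f := fun i => v i ^ 2) (s := s) fun i _ => sq_nonneg (v i)

theorem Finset.sq_sum_sq_mul_sq_le {ι : Type*} (s : Finset ι) (u w : ι → ℝ) :
    (∑ i ∈ s, u i ^ 2 * w i ^ 2) ^ 2 ≤ (∑ i ∈ s, u i ^ 4) * ∑ i ∈ s, w i ^ 4 := by
  have h := sum_mul_sq_le_sq_mul_sq s (fun i => u i ^ 2) (fun i => w i ^ 2)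
  simp only [← pow_mul] at h
  exact h

theorem Real.one_lt_sqrt_sq_add_one {x : ℝ} (hx : x ≠ 0) : 1 < √(x ^ 2 + 1) :=
  (lt_sqrt zero_le_one).2 (by simpa using sq_pos_of_ne_zero hx)

theorem sq_mul_mul_sq_div_add_one_le {a S A B : ℝ} (ha : 0 < a) (hS : S ^ 2 ≤ A * B)
    (hA : 0 ≤ A) (hB : 0 ≤ B) (hAB : A * B ≤ 1) :
    (a * S) ^ 2 * ((2 / a) ^ 2 + 1) ≤ (2 + a * A) * (2 + a * B) := by
  have hexpand : (a * S) ^ 2 * ((2 / a) ^ 2 + 1) = (4 + a ^ 2) * S ^ 2 := by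
    field_simp
    ring
  rw [hexpand]
  nlinarith [mul_le_mul_of_nonneg_left hS (by positivity : (0 : ℝ) ≤ 4 + a ^ 2),
    mul_nonneg ha.le hA, mul_nonneg ha.le hB, sq_nonneg a]

theorem mul_div_sqrt_mul_sqrt_le {a S A B : ℝ} (ha : 0 < a) (hS₀ : 0 ≤ S)
    (hS : S ^ 2 ≤ A * B) (hA : 0 ≤ A) (hB : 0 ≤ B) (hAB : A * B ≤ 1) :
    a * S / (√(2 + a * A) * √(2 + a * B)) ≤ 1 / √((2 / a) ^ 2 + 1) := by
  have hA' : 0 < 2 + a * A := by positivity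
  have hB' : 0 < 2 + a * B := by positivity
  rw [div_le_div_iff₀ (by positivity) (by positivity), one_mul,
    ← sqrt_mul hA'.le, ← sqrt_sq (by positivity : 0 ≤ a * S), ← sqrt_mul (sq_nonneg _)]
  exact sqrt_le_sqrt (sq_mul_mul_sq_div_add_one_le ha hS hA hB hAB)

theorem offdiag_correlation_bounded_away_from_one_general
    {d : ℕ} (u w : Fin d → ℝ) (κ : ℝ) (hκ : 3 < κ)
    (hu : (∑ l, (u l) ^ 2) = 1) (hw : (∑ l, (w l) ^ 2) = 1) :
    0 < 1 - 1 / Real.sqrt ((2 / (κ - 3)) ^ 2 + 1) ∧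
    1 - 1 / Real.sqrt ((2 / (κ - 3)) ^ 2 + 1) < 1 ∧
    ((κ - 3) * ∑ l, (u l) ^ 2 * (w l) ^ 2) /
        (Real.sqrt (2 + (κ - 3) * ∑ l, (u l) ^ 4) *
          Real.sqrt (2 + (κ - 3) * ∑ l, (w l) ^ 4)) ≤
      1 - (1 - 1 / Real.sqrt ((2 / (κ - 3)) ^ 2 + 1)) := by
  have ha : 0 < κ - 3 := sub_pos.2 hκ
  have hsqrt : 1 < √((2 / (κ - 3)) ^ 2 + 1) := one_lt_sqrt_sq_add_one (by positivity)
  have hu4 : ∑ l, u l ^ 4 ≤ 1 := by simpa [hu] using sum_pow_four_le_sq_sum_sq univ u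
  have hw4 : ∑ l, w l ^ 4 ≤ 1 := by simpa [hw] using sum_pow_four_le_sq_sum_sq univ w
  have hu4₀ : 0 ≤ ∑ l, u l ^ 4 := sum_nonneg fun l _ => by positivity
  have hw4₀ : 0 ≤ ∑ l, w l ^ 4 := sum_nonneg fun l _ => by positivity
  refine ⟨sub_pos.2 ((div_lt_one (by positivity)).2 hsqrt),
    sub_lt_self _ (by positivity), ?_⟩
  rw [sub_sub_cancel]
  exact mul_div_sqrt_mul_sqrt_le ha (sum_nonneg fun l _ => by positivity)
    (sq_sum_sq_mul_sq_le univ u w) hu4₀ hw4₀ (mul_le_one₀ hu4 hw4₀ hw4)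

/-- For orthonormal u, ũ in ℝ^d and κ > 3, the off-diagonal correlation is bounded
away from 1: it is at most 1 − ε₁ with ε₁ = 1 − 1/sqrt((2/(κ−3))² + 1) ∈ (0,1). -/
theorem offdiag_correlation_bounded_away_from_one
    {d : ℕ} (u w : Fin d → ℝ) (κ : ℝ) (hκ : 3 < κ)
    (hu : (∑ l, (u l) ^ 2) = 1) (hw : (∑ l, (w l) ^ 2) = 1)
    (horth : (∑ l, u l * w l) = 0) :
    0 < 1 - 1 / Real.sqrt ((2 / (κ - 3)) ^ 2 + 1) ∧
    1 - 1 / Real.sqrt ((2 / (κ - 3)) ^ 2 + 1) < 1 ∧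
    ((κ - 3) * ∑ l, (u l) ^ 2 * (w l) ^ 2) /
        (Real.sqrt (2 + (κ - 3) * ∑ l, (u l) ^ 4) *
          Real.sqrt (2 + (κ - 3) * ∑ l, (w l) ^ 4)) ≤
      1 - (1 - 1 / Real.sqrt ((2 / (κ - 3)) ^ 2 + 1)) :=
  offdiag_correlation_bounded_away_from_one_general u w κ hκ hu hw
end

section
/- Let A ∈ ℝ^{d×p} with singular value decomposition A = U D Vᵀ, where the columns of U are u₁,…,u_p. Fix k ≤ p, ε > 0, and let v be a vector in the image of U with Σ_{l=1}^p ⟨u_l, v⟩²/ε² ≤ 1 and Σ_{l=1}^p ⟨u_l, v⟩²/σ_l(A)² ≤ 1 (interpreting terms with σ_l(A) = 0 as requiring ⟨u_l,v⟩ = 0). Define A(ε) to be the matrix with the same singular vectors as A but with j-th singular value replaced by sqrt(2)·min{σ_j(A), ε}. Then v lies in the ellipsoid A(ε)(B_p(1)), i.e., there exists x ∈ ℝ^p with ‖x‖₂ ≤ 1 and A(ε)·x = v. -/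
/-!
Write `c = Uᵀ v` for the coordinates of `v` in the basis `u₁, …, u_p`, so that `v = U c`, and put
`m_j = √2 · min (σ_j, ε)`. The preimage is `x = V w` with `w_j = c_j / m_j`; since `V` is an
isometry, `‖x‖² = Σ c_j² / (2 min (σ_j, ε)²)`, and each summand is at most the average of
`c_j² / σ_j²` and `c_j² / ε²`, so `‖x‖² ≤ 1` by the two ellipsoid constraints.
-/

open Matrix

theorem sq_div_min_sq_le (c a b : ℝ) : c ^ 2 / min a b ^ 2 ≤ c ^ 2 / a ^ 2 + c ^ 2 / b ^ 2 := by
  have ha : 0 ≤ c ^ 2 / a ^ 2 := by positivity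
  have hb : 0 ≤ c ^ 2 / b ^ 2 := by positivity
  rcases min_choice a b with h | h <;> rw [h] <;> linarith

theorem sum_sq_div_sqrt_two_mul_min_le_one {ι : Type*} [Fintype ι] {c a b : ι → ℝ}
    (ha : ∑ i, c i ^ 2 / a i ^ 2 ≤ 1) (hb : ∑ i, c i ^ 2 / b i ^ 2 ≤ 1) :
    ∑ i, (c i / (√2 * min (a i) (b i))) ^ 2 ≤ 1 := by
  have hterm : ∀ i, (c i / (√2 * min (a i) (b i))) ^ 2 = c i ^ 2 / min (a i) (b i) ^ 2 / 2 := by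
    intro i
    rw [div_pow, mul_pow, Real.sq_sqrt zero_le_two]
    ring
  calc ∑ i, (c i / (√2 * min (a i) (b i))) ^ 2
      ≤ ∑ i, (c i ^ 2 / a i ^ 2 + c i ^ 2 / b i ^ 2) / 2 := by
        gcongr with i
        rw [hterm]
        gcongr
        exact sq_div_min_sq_le _ _ _
    _ = ((∑ i, c i ^ 2 / a i ^ 2) + ∑ i, c i ^ 2 / b i ^ 2) / 2 := by
        rw [← Finset.sum_div, Finset.sum_add_distrib]
    _ ≤ 1 := by linarith

namespace Matrix

variable {m n : Type*} [Fintype m] [Fintype n]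

theorem sum_sq_mulVec_of_transpose_mul_self_eq_one [DecidableEq n] {V : Matrix m n ℝ} (hV : Vᵀ * V = 1)
    (w : n → ℝ) : ∑ i, (V *ᵥ w) i ^ 2 = ∑ j, w j ^ 2 := by
  simp only [sq]
  change (V *ᵥ w) ⬝ᵥ (V *ᵥ w) = w ⬝ᵥ w
  rw [dotProduct_mulVec, ← mulVec_transpose, mulVec_mulVec, hV, one_mulVec]

theorem mulVec_transpose_mulVec_of_mem_range {R : Type*} [CommSemiring R] [DecidableEq n]
    {U : Matrix m n R} (hU : Uᵀ * U = 1) {v : m → R} (hv : ∃ y, U *ᵥ y = v) :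
    U *ᵥ (Uᵀ *ᵥ v) = v := by
  obtain ⟨y, rfl⟩ := hv
  rw [mulVec_mulVec y Uᵀ U, hU, one_mulVec]

theorem mul_transpose_mulVec_mulVec {l R : Type*} [CommSemiring R] [DecidableEq n]
    (B : Matrix l n R) {V : Matrix n n R} (hV : Vᵀ * V = 1) (w : n → R) :
    (B * Vᵀ) *ᵥ (V *ᵥ w) = B *ᵥ w := by
  rw [mulVec_mulVec, Matrix.mul_assoc, hV, Matrix.mul_one]

theorem diagonal_mulVec_div {K : Type*} [Field K] [DecidableEq n] {d c : n → K}
    (hdc : ∀ j, d j = 0 → c j = 0) : diagonal d *ᵥ (fun j => c j / d j) = c := by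
  funext j
  rw [mulVec_diagonal]
  exact mul_div_cancel_of_imp' (hdc j)

end Matrix

theorem mem_shrunken_ellipsoid_general
    {d p : ℕ}
    (U : Matrix (Fin d) (Fin p) ℝ) (V : Matrix (Fin p) (Fin p) ℝ)
    (σ : Fin p → ℝ)
    (hU : Uᵀ * U = 1) (hV : Vᵀ * V = 1)
    (ε : ℝ) (hε : 0 < ε)
    (v : Fin d → ℝ) (hv : ∃ y : Fin p → ℝ, U.mulVec y = v)
    (h1 : (∑ l, (∑ i, U i l * v i) ^ 2 / ε ^ 2) ≤ 1)
    (h2 : (∑ l, if σ l = 0 then 0 else (∑ i, U i l * v i) ^ 2 / (σ l) ^ 2) ≤ 1)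
    (h2' : ∀ l, σ l = 0 → (∑ i, U i l * v i) = 0) :
    ∃ x : Fin p → ℝ, (∑ i, (x i) ^ 2) ≤ 1 ∧
      (U * diagonal (fun j => Real.sqrt 2 * min (σ j) ε) * Vᵀ).mulVec x = v := by
  set c := Uᵀ *ᵥ v
  set s := fun j => √2 * min (σ j) ε
  -- the `if` in `h2` is redundant, as division by zero gives zero
  have hσ : ∑ l, c l ^ 2 / σ l ^ 2 ≤ 1 := by
    have hif : ∀ l, (if σ l = 0 then 0 else c l ^ 2 / σ l ^ 2) = c l ^ 2 / σ l ^ 2 := fun l => by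
      split_ifs with h <;> simp [h]
    exact (Finset.sum_congr rfl fun l _ => (hif l).symm).trans_le h2
  have hs : ∀ j, s j = 0 → c j = 0 := fun j hj => by
    have hmin : min (σ j) ε = 0 := by simpa [s] using hj
    rcases min_choice (σ j) ε with h | h
    · exact h2' j (h ▸ hmin)
    · exact absurd (h ▸ hmin) hε.ne'
  refine ⟨V *ᵥ fun j => c j / s j, ?_, ?_⟩
  · rw [sum_sq_mulVec_of_transpose_mul_self_eq_one hV]
    exact sum_sq_div_sqrt_two_mul_min_le_one (b := fun _ => ε) hσ h1
  · rw [mul_transpose_mulVec_mulVec _ hV, ← mulVec_mulVec, diagonal_mulVec_div hs,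
      mulVec_transpose_mulVec_of_mem_range hU hv]

/-- If v lies in the image of U and satisfies the two ellipsoid constraints
Σ_l ⟨u_l,v⟩²/ε² ≤ 1 and Σ_l ⟨u_l,v⟩²/σ_l(A)² ≤ 1 (terms with σ_l(A)=0 interpreted as
forcing ⟨u_l,v⟩=0), then v lies in the ellipsoid A(ε)(B_p(1)), where A(ε) has the same
singular vectors as A = U D Vᵀ and j-th singular value √2·min(σ_j(A), ε). -/
theorem mem_shrunken_ellipsoid
    {d p : ℕ} (hdp : p ≤ d)
    (U : Matrix (Fin d) (Fin p) ℝ) (V : Matrix (Fin p) (Fin p) ℝ)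
    (σ : Fin p → ℝ)
    (hU : Uᵀ * U = 1) (hV : Vᵀ * V = 1) (hσ : ∀ j, 0 ≤ σ j)
    (A : Matrix (Fin d) (Fin p) ℝ) (hA : A = U * diagonal σ * Vᵀ)
    (ε : ℝ) (hε : 0 < ε)
    (v : Fin d → ℝ) (hv : ∃ y : Fin p → ℝ, U.mulVec y = v)
    (h1 : (∑ l, (∑ i, U i l * v i) ^ 2 / ε ^ 2) ≤ 1)
    (h2 : (∑ l, if σ l = 0 then 0 else (∑ i, U i l * v i) ^ 2 / (σ l) ^ 2) ≤ 1)
    (h2' : ∀ l, σ l = 0 → (∑ i, U i l * v i) = 0) :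
    ∃ x : Fin p → ℝ, (∑ i, (x i) ^ 2) ≤ 1 ∧
      (U * diagonal (fun j => Real.sqrt 2 * min (σ j) ε) * Vᵀ).mulVec x = v :=
  mem_shrunken_ellipsoid_general U V σ hU hV ε hε v hv h1 h2 h2'
end

section
/- Let A ∈ ℝ^{d×p} (d ≥ p) have singular value decomposition A = U D Vᵀ, let δ ∈ (0,1), let k ≤ p, let M ∈ ℝ^{d×d} be symmetric, and let V_k ∈ ℝ^{p×k} denote the first k columns of V. Let T_k^δ(D) be the diagonal matrix obtained from D by multiplying the first k diagonal entries by δ. Then there is an absolute constant c > 0 such that sup{|wᵀ Aᵀ M A w| : ‖w‖₂ ≤ 1, ‖V_kᵀ w‖₂ ≤ δ} ≤ c·‖T_k^δ(D)·Uᵀ M U·T_k^δ(D)‖_op. -/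
open Matrix

private lemma quad_eq {n m : ℕ} (C : Matrix (Fin n) (Fin m) ℝ) (M : Matrix (Fin n) (Fin n) ℝ)
    (a : Fin m → ℝ) :
    (C.mulVec a) ⬝ᵥ M.mulVec (C.mulVec a) = a ⬝ᵥ ((Cᵀ*M*C).mulVec a) := by
  conv_rhs => rw [← Matrix.mulVec_mulVec, ← Matrix.mulVec_mulVec,
    Matrix.dotProduct_mulVec, Matrix.vecMul_transpose]

private lemma bdd_quad {p : ℕ} (B : Matrix (Fin p) (Fin p) ℝ) :
    BddAbove {r : ℝ | ∃ x : Fin p → ℝ, (∑ i, (x i) ^ 2) ≤ 1 ∧ r = |x ⬝ᵥ B.mulVec x|} := by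
  refine ⟨∑ i, ∑ j, |B i j|, ?_⟩
  rintro r ⟨x, hx, rfl⟩
  have hxi : ∀ i, |x i| ≤ 1 := by
    intro i
    have h1 : x i ^ 2 ≤ 1 := le_trans (Finset.single_le_sum (f := fun i => x i ^ 2)
      (fun i _ => sq_nonneg _) (Finset.mem_univ i)) hx
    nlinarith [abs_nonneg (x i), sq_abs (x i)]
  calc |x ⬝ᵥ B.mulVec x| = |∑ i, x i * ∑ j, B i j * x j| := by
        simp [dotProduct, Matrix.mulVec]
    _ ≤ ∑ i, |x i * ∑ j, B i j * x j| := Finset.abs_sum_le_sum_abs _ _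
    _ ≤ ∑ i, ∑ j, |B i j| := by
        apply Finset.sum_le_sum
        intro i _
        rw [abs_mul]
        calc |x i| * |∑ j, B i j * x j| ≤ 1 * ∑ j, |B i j * x j| :=
              mul_le_mul (hxi i) (Finset.abs_sum_le_sum_abs _ _) (abs_nonneg _)
                zero_le_one
          _ = ∑ j, |B i j| * |x j| := by rw [one_mul]; simp [abs_mul]
          _ ≤ ∑ j, |B i j| * 1 := Finset.sum_le_sum fun j _ =>
              mul_le_mul_of_nonneg_left (hxi j) (abs_nonneg _)
          _ = ∑ j, |B i j| := by simp

/-- For A = U D Vᵀ, δ ∈ (0,1), k ≤ p, M symmetric, and T_k^δ(D) obtained from D by scaling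
the first k diagonal entries by δ, there is an absolute constant c > 0 such that
sup{|wᵀAᵀMAw| : ‖w‖₂ ≤ 1, ‖V_kᵀw‖₂ ≤ δ} ≤ c·‖T_k^δ(D)·UᵀMU·T_k^δ(D)‖_op, where the operator
norm of the symmetric matrix is expressed as the supremum of |xᵀ(·)x| over the unit ball. -/
theorem sup_constrained_quadratic_form_le
    : ∃ c : ℝ, 0 < c ∧
      ∀ (d p : ℕ) (U : Matrix (Fin d) (Fin p) ℝ) (V : Matrix (Fin p) (Fin p) ℝ)
        (σ : Fin p → ℝ),
        Uᵀ * U = 1 → Vᵀ * V = 1 → (∀ j, 0 ≤ σ j) →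
        ∀ (A : Matrix (Fin d) (Fin p) ℝ), A = U * diagonal σ * Vᵀ →
        ∀ (δ : ℝ), 0 < δ → δ < 1 →
        ∀ (k : ℕ) (hk : k ≤ p),
        ∀ (M : Matrix (Fin d) (Fin d) ℝ), Mᵀ = M →
        ∀ (w : Fin p → ℝ), (∑ i, (w i) ^ 2) ≤ 1 →
          (∑ j : Fin k, (∑ i, V i (Fin.castLE hk j) * w i) ^ 2) ≤ δ ^ 2 →
          |(A.mulVec w) ⬝ᵥ (M.mulVec (A.mulVec w))| ≤
            c * sSup {r : ℝ | ∃ x : Fin p → ℝ, (∑ i, (x i) ^ 2) ≤ 1 ∧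
                r = |x ⬝ᵥ ((diagonal (fun j : Fin p => (if (j : ℕ) < k then δ else 1) * σ j) *
                      Uᵀ * M * U *
                      diagonal (fun j : Fin p => (if (j : ℕ) < k then δ else 1) * σ j)).mulVec x)|} := by
  refine ⟨2, two_pos, ?_⟩
  intro d p U V σ hU hV hσ A hA δ hδ0 hδ1 k hk M hM w hw hVw
  set t : Fin p → ℝ := fun j : Fin p => (if (j : ℕ) < k then δ else 1) * σ j with ht
  set T : Matrix (Fin p) (Fin p) ℝ := diagonal t with hT
  set B : Matrix (Fin p) (Fin p) ℝ := T * Uᵀ * M * U * T with hB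
  set S : Set ℝ := {r : ℝ | ∃ x : Fin p → ℝ, (∑ i, (x i) ^ 2) ≤ 1 ∧ r = |x ⬝ᵥ B.mulVec x|}
    with hS
  -- v = Vᵀ w
  set v : Fin p → ℝ := Vᵀ.mulVec w with hv
  have hvj : ∀ j, v j = ∑ i, V i j * w i := by
    intro j; simp [hv, Matrix.mulVec, dotProduct, Matrix.transpose_apply]
  -- total norm of v
  have hVVt : V * Vᵀ = 1 := by
    rw [mul_eq_one_comm]; exact hV
  have hvnorm : (∑ j, v j ^ 2) ≤ 1 := by
    have : (∑ j, v j ^ 2) = v ⬝ᵥ (1 : Matrix (Fin p) (Fin p) ℝ).mulVec v := by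
      simp [dotProduct, sq]
    rw [this, hv, quad_eq Vᵀ 1 w]
    have : Vᵀᵀ * 1 * Vᵀ = 1 := by simp [hVVt]
    rw [this]
    simpa [dotProduct, sq] using hw
  -- the partial sum bound
  have hpartial : (∑ j : Fin p, if (j : ℕ) < k then v j ^ 2 else 0) ≤ δ ^ 2 := by
    have : (∑ j : Fin k, v (Fin.castLE hk j) ^ 2)
        = ∑ j : Fin p, if (j:ℕ) < k then v j ^ 2 else 0 := by
      rw [← Finset.sum_filter]
      apply Finset.sum_bij (fun (j : Fin k) _ => Fin.castLE hk j)
      · intro a _; simp [a.isLt]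
      · intro a _ b _ h; exact Fin.castLE_injective hk h
      · intro b hb; simp at hb; exact ⟨⟨b.val, hb⟩, Finset.mem_univ _, rfl⟩
      · intro a _; rfl
    rw [← this]
    simpa [hvj] using hVw
  -- the vector x
  set x : Fin p → ℝ := fun j => if (j : ℕ) < k then v j / δ else v j with hx
  have hTx : ∀ j, t j * x j = σ j * v j := by
    intro j
    by_cases h : (j : ℕ) < k <;> simp [hx, ht, h] <;> field_simp <;> ring
  have hAw : A.mulVec w = U.mulVec (T.mulVec x) := by
    have e : diagonal σ *ᵥ v = T *ᵥ x := by
      funext j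
      rw [hT, Matrix.mulVec_diagonal, Matrix.mulVec_diagonal, hTx j]
    rw [hA, ← Matrix.mulVec_mulVec, ← Matrix.mulVec_mulVec, ← hv, e]
  -- quadratic form equality
  have hquad : (A.mulVec w) ⬝ᵥ M.mulVec (A.mulVec w) = x ⬝ᵥ B.mulVec x := by
    rw [hAw, quad_eq U M (T.mulVec x), quad_eq T (Uᵀ * M * U) x]
    rw [hB, hT, Matrix.diagonal_transpose]
    simp only [Matrix.mul_assoc]
  -- norm of x ≤ 2
  have hxnorm : (∑ j, x j ^ 2) ≤ 2 := by
    have e1 : ∀ j : Fin p, x j ^ 2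
        = (if (j:ℕ) < k then (1/δ^2 - 1) * v j ^ 2 else 0) + v j ^ 2 := by
      intro j
      by_cases h : (j : ℕ) < k
      · simp only [hx, h, if_true]
        field_simp
        ring
      · simp [hx, h]
    have e2 : (∑ j : Fin p, (if (j:ℕ) < k then (1/δ^2 - 1) * v j ^ 2 else 0))
        = (1/δ^2 - 1) * ∑ j : Fin p, (if (j:ℕ) < k then v j ^ 2 else 0) := by
      rw [Finset.mul_sum]
      exact Finset.sum_congr rfl fun j _ => by by_cases h : (j:ℕ) < k <;> simp [h]
    have h2 : (0:ℝ) < δ ^ 2 := by positivity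
    have hcoef : 0 ≤ 1/δ^2 - 1 := by
      rw [sub_nonneg, le_div_iff₀ h2, one_mul]
      nlinarith
    have e3 : (1/δ^2 - 1) * δ^2 = 1 - δ^2 := by
      field_simp
    calc (∑ j, x j ^ 2)
        = ((1/δ^2 - 1) * ∑ j : Fin p, (if (j:ℕ) < k then v j ^ 2 else 0)) + ∑ j, v j ^ 2 := by
          rw [← e2, ← Finset.sum_add_distrib]
          exact Finset.sum_congr rfl fun j _ => e1 j
      _ ≤ (1/δ^2 - 1) * δ^2 + 1 := add_le_add (mul_le_mul_of_nonneg_left hpartial hcoef) hvnorm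
      _ ≤ 2 := by rw [e3]; nlinarith
  -- the scaled vector
  set y : Fin p → ℝ := fun j => x j / Real.sqrt 2 with hy
  have hsq2 : (Real.sqrt 2) ^ 2 = 2 := Real.sq_sqrt (by norm_num)
  have hsqpos : (0:ℝ) < Real.sqrt 2 := Real.sqrt_pos.mpr (by norm_num)
  have hynorm : (∑ j, y j ^ 2) ≤ 1 := by
    have : (∑ j, y j ^ 2) = (∑ j, x j ^ 2) / 2 := by
      rw [Finset.sum_div]
      apply Finset.sum_congr rfl
      intro j _
      rw [hy, div_pow, hsq2]
    rw [this]; linarith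
  have hyquad : |y ⬝ᵥ B.mulVec y| = |x ⬝ᵥ B.mulVec x| / 2 := by
    have hyx : y = (Real.sqrt 2)⁻¹ • x := by
      funext j; simp [hy, div_eq_inv_mul, smul_eq_mul]
    rw [hyx, Matrix.mulVec_smul, dotProduct_smul, smul_dotProduct]
    rw [smul_eq_mul, smul_eq_mul, ← mul_assoc, abs_mul, abs_mul]
    have : |(Real.sqrt 2)⁻¹| * |(Real.sqrt 2)⁻¹| = 1/2 := by
      rw [abs_of_pos (by positivity)]
      rw [← mul_inv]
      rw [show Real.sqrt 2 * Real.sqrt 2 = 2 by nlinarith]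
      norm_num
    rw [this]; ring
  have hmem : |x ⬝ᵥ B.mulVec x| / 2 ∈ S := ⟨y, hynorm, hyquad.symm⟩
  have hle : |x ⬝ᵥ B.mulVec x| / 2 ≤ sSup S := le_csSup (bdd_quad B) hmem
  rw [hquad]
  linarith
end
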